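/- Let N ≥ 2, let -1 ≤ τ_1 < τ_2 < … < τ_N = 1 be distinct points, let ω_N > 0, and let M be an N×N real matrix with the Radau costate differentiation property. Then M is invertible and its inverse is given explicitly by: M^{-1}_{ij} = ω_N M_j(1) + ∫_{1}^{τ_i} M_j(τ) dτ for 1 ≤ i < N and 1 ≤ j < N; M^{-1}_{iN} = −ω_N for 1 ≤ i ≤ N; and M^{-1}_{Nj} = ω_N M_j(1) for 1 ≤ j < N, where M_j(τ) = Π_{i≠j, 1≤i≤N−1} (τ − τ_i)/(τ_j − τ_i) is the Lagrange interpolating basis relative to the point set τ_1, …, τ_{N−1}. -/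

import Mathlib

/-!
Column `j` of the claimed inverse is the vector of values at the nodes of a polynomial `q_j` of
degree at most `N - 1`: for `j < N` the primitive of `M_j` with `q_j(1) = ω_N M_j(1)`, and for
`j = N` the constant `-ω_N`. The Radau property sends it to `(q_j'(τ_i))_{i<N}` followed by
`q_j'(1) - q_j(1)/ω_N`, which is the `j`-th unit vector since `M_j` is the Lagrange basis of
`τ_1, …, τ_{N-1}`. So `M` times the claimed inverse is `1`, and a one-sided inverse of a square
matrix is two-sided.
-/

open Polynomial Matrix

noncomputable section

/-- The Lagrange interpolating basis polynomial `M_j` relative to the point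
set `τ_1, …, τ_{N-1}` (the first `N-1` of the `N` points `τ`). -/
def subBasis (N : ℕ) (τ : Fin N → ℝ) (j : Fin (N - 1)) : Polynomial ℝ :=
  Lagrange.basis Finset.univ (fun k : Fin (N - 1) => τ (Fin.castLE (Nat.sub_le N 1) k)) j

namespace Polynomial

variable {K : Type*} [Field K]

def antideriv (p : K[X]) : K[X] :=
  p.sum fun n a => C (a / (n + 1)) * X ^ (n + 1)

theorem derivative_antideriv [CharZero K] (p : K[X]) : derivative (antideriv p) = p := by
  conv_rhs => rw [← p.sum_C_mul_X_pow_eq]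
  simp only [antideriv, Polynomial.sum, map_sum]
  refine Finset.sum_congr rfl fun n _ => ?_
  rw [derivative_C_mul_X_pow, Nat.add_sub_cancel, Nat.cast_add_one,
    div_mul_cancel₀ _ (Nat.cast_add_one_ne_zero n)]

theorem natDegree_antideriv_le (p : K[X]) : (antideriv p).natDegree ≤ p.natDegree + 1 :=
  natDegree_sum_le_of_forall_le _ _ fun n hn =>
    (natDegree_C_mul_X_pow_le _ _).trans (Nat.add_le_add_right (le_natDegree_of_mem_supp n hn) 1)

theorem integral_eval_eq_sub_of_derivative_eq {p q : ℝ[X]} (h : derivative q = p) (a b : ℝ) :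
    ∫ t in a..b, p.eval t = q.eval b - q.eval a :=
  intervalIntegral.integral_eq_sub_of_hasDerivAt (fun x _ => h ▸ q.hasDerivAt x)
    (p.continuous.intervalIntegrable _ _)

end Polynomial

theorem Matrix.mul_eq_one_of_mulVec_col {n R : Type*} [Fintype n] [DecidableEq n] [Semiring R]
    {M A : Matrix n n R} (h : ∀ j, M *ᵥ A.col j = Pi.single j 1) : M * A = 1 :=
  ext_of_mulVec_single fun j => by rw [← mulVec_mulVec, mulVec_single_one, h, one_mulVec]

section subBasis

variable {N : ℕ} {τ : Fin N → ℝ}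

theorem natDegree_subBasis (hτ : Function.Injective τ) (j : Fin (N - 1)) :
    (subBasis N τ j).natDegree = N - 2 := by
  rw [subBasis, Lagrange.natDegree_basis (fun a _ b _ hab => Fin.castLE_injective _ (hτ hab))
    (Finset.mem_univ j), Finset.card_univ, Fintype.card_fin, Nat.sub_sub]

theorem eval_subBasis (hτ : Function.Injective τ) (j k : Fin (N - 1)) :
    (subBasis N τ j).eval (τ (Fin.castLE (Nat.sub_le N 1) k)) =
      Pi.single (M := fun _ => ℝ) j 1 k := by
  rw [subBasis]
  rcases eq_or_ne k j with rfl | hkj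
  · simpa using Lagrange.eval_basis_self (fun a _ b _ hab => Fin.castLE_injective _ (hτ hab))
      (Finset.mem_univ k)
  · rw [Pi.single_apply, if_neg hkj]
    exact Lagrange.eval_basis_of_ne (v := fun k => τ (Fin.castLE _ k)) (Ne.symm hkj)
      (Finset.mem_univ _)

end subBasis

section Radau

variable {N : ℕ} (τ : Fin N → ℝ) (ωN : ℝ)

/-- Indices are `0`-based: row `N - 1` is the paper's row `N`, at the node `τ_N = 1`. -/
def radauCostateDeriv (p : ℝ[X]) : Fin N → ℝ := fun i =>
  if (i : ℕ) < N - 1 then (derivative p).eval (τ i) else (derivative p).eval 1 - p.eval 1 / ωN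

def IsRadauCostateDiffMatrix (M : Matrix (Fin N) (Fin N) ℝ) : Prop :=
  ∀ p : ℝ[X], p.degree ≤ (N - 1 : ℕ) → M *ᵥ (fun j => p.eval (τ j)) = radauCostateDeriv τ ωN p

def radauInverseCol (j : Fin N) : ℝ[X] :=
  if hj : (j : ℕ) < N - 1 then
    C (ωN * (subBasis N τ ⟨j, hj⟩).eval 1) + antideriv (subBasis N τ ⟨j, hj⟩) -
      C ((antideriv (subBasis N τ ⟨j, hj⟩)).eval 1)
  else C (-ωN)

def radauInverse : Matrix (Fin N) (Fin N) ℝ :=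
  of fun i j => (radauInverseCol τ ωN j).eval (τ i)

variable {τ ωN}

theorem derivative_radauInverseCol {j : Fin N} (hj : (j : ℕ) < N - 1) :
    derivative (radauInverseCol τ ωN j) = subBasis N τ ⟨j, hj⟩ := by
  simp [radauInverseCol, hj, derivative_antideriv]

theorem eval_radauInverseCol {j : Fin N} (hj : (j : ℕ) < N - 1) (x : ℝ) :
    (radauInverseCol τ ωN j).eval x =
      ωN * (subBasis N τ ⟨j, hj⟩).eval 1 + ∫ t in (1 : ℝ)..x, (subBasis N τ ⟨j, hj⟩).eval t := by
  rw [integral_eval_eq_sub_of_derivative_eq (derivative_antideriv _)]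
  simp only [radauInverseCol, hj, dite_true, eval_sub, eval_add, eval_C]
  ring

theorem radauInverseCol_of_not_lt {j : Fin N} (hj : ¬(j : ℕ) < N - 1) :
    radauInverseCol τ ωN j = C (-ωN) := by
  simp [radauInverseCol, hj]

theorem degree_radauInverseCol_le (hτ : Function.Injective τ) (j : Fin N) :
    (radauInverseCol τ ωN j).degree ≤ (N - 1 : ℕ) := by
  by_cases hj : (j : ℕ) < N - 1
  · rw [← natDegree_le_iff_degree_le]
    have h := natDegree_antideriv_le (subBasis N τ ⟨j, hj⟩)
    rw [natDegree_subBasis hτ] at h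
    simp only [radauInverseCol, hj, dite_true]
    refine (natDegree_sub_le _ _).trans (max_le ((natDegree_add_le _ _).trans ?_) ?_) <;>
      simp only [natDegree_C, max_le_iff] <;> omega
  · rw [radauInverseCol_of_not_lt hj]
    exact degree_C_le.trans (WithBot.coe_le_coe.mpr (Nat.zero_le _))

theorem radauCostateDeriv_radauInverseCol (hτ : Function.Injective τ) (hωN : ωN ≠ 0)
    (j : Fin N) : radauCostateDeriv τ ωN (radauInverseCol τ ωN j) = Pi.single j 1 := by
  funext i
  by_cases hj : (j : ℕ) < N - 1 <;> by_cases hi : (i : ℕ) < N - 1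
  · have h := eval_subBasis hτ ⟨j, hj⟩ ⟨i, hi⟩
    simp only [Fin.castLE_mk, Fin.eta] at h
    simp only [radauCostateDeriv, hi, if_true, derivative_radauInverseCol hj, h, Pi.single_apply,
      Fin.ext_iff]
  · have hij : i ≠ j := fun h => hi (h ▸ hj)
    simp only [radauCostateDeriv, hi, if_false, derivative_radauInverseCol hj,
      eval_radauInverseCol hj, intervalIntegral.integral_same, Pi.single_eq_of_ne hij]
    field_simp
    ring
  · have hij : i ≠ j := fun h => hj (h ▸ hi)
    simp [radauCostateDeriv, hi, radauInverseCol_of_not_lt hj, Pi.single_eq_of_ne hij]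
  · have hij : i = j := Fin.ext (by omega)
    subst hij
    simp [radauCostateDeriv, hi, radauInverseCol_of_not_lt hj, hωN]

theorem mul_radauInverse_eq_one (hτ : Function.Injective τ) (hωN : ωN ≠ 0)
    {M : Matrix (Fin N) (Fin N) ℝ} (hM : IsRadauCostateDiffMatrix τ ωN M) :
    M * radauInverse τ ωN = 1 :=
  mul_eq_one_of_mulVec_col fun j => by
    rw [← radauCostateDeriv_radauInverseCol hτ hωN j]
    exact hM _ (degree_radauInverseCol_le hτ j)

end Radau

theorem isRadauCostateDiffMatrix_of_forall {N : ℕ} (hN : 0 < N) {τ : Fin N → ℝ} {ωN : ℝ}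
    {M : Matrix (Fin N) (Fin N) ℝ}
    (hM : ∀ p : Polynomial ℝ, p.degree ≤ (N - 1 : ℕ) →
      (∀ i : Fin N, (i : ℕ) < N - 1 →
        M.mulVec (fun j => p.eval (τ j)) i = (derivative p).eval (τ i)) ∧
      M.mulVec (fun j => p.eval (τ j)) ⟨N - 1, by omega⟩ =
        (derivative p).eval 1 - p.eval 1 / ωN) :
    IsRadauCostateDiffMatrix τ ωN M := by
  intro p hp
  obtain ⟨h_interior, h_last⟩ := hM p hp
  funext i
  unfold radauCostateDeriv
  split_ifs with hi
  · exact h_interior i hi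
  · rwa [show i = ⟨N - 1, by omega⟩ from Fin.ext (by simp only; omega)]

/-- Let `N ≥ 2`, `-1 ≤ τ_1 < … < τ_N = 1`, `ω_N > 0`, and let
`M` be an `N×N` matrix with the Radau costate differentiation property:
`(Mp)_i = ṗ(τ_i)` for `i < N` and `(Mp)_N = ṗ(1) − p(1)/ω_N` for every
polynomial `p` of degree at most `N-1`.  Then `M` is invertible with
`M⁻¹_{ij} = ω_N M_j(1) + ∫_1^{τ_i} M_j` for `i, j < N`, `M⁻¹_{iN} = −ω_N`, and
`M⁻¹_{Nj} = ω_N M_j(1)` for `j < N`, where `M_j` is the Lagrange basis for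
`τ_1, …, τ_{N-1}`. -/
theorem radau_costate_explicit_inverse
    (N : ℕ) (hN : 2 ≤ N) (τ : Fin N → ℝ) (ωN : ℝ)
    (hmono : StrictMono τ)
    (hlast : τ ⟨N - 1, by omega⟩ = 1)
    (hωN : 0 < ωN)
    (M : Matrix (Fin N) (Fin N) ℝ)
    (hM : ∀ p : Polynomial ℝ, p.degree ≤ (N - 1 : ℕ) →
      (∀ i : Fin N, (i : ℕ) < N - 1 →
        M.mulVec (fun j => p.eval (τ j)) i = (derivative p).eval (τ i)) ∧
      M.mulVec (fun j => p.eval (τ j)) ⟨N - 1, by omega⟩ =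
        (derivative p).eval 1 - p.eval 1 / ωN) :
    ∃ Minv : Matrix (Fin N) (Fin N) ℝ,
      M * Minv = 1 ∧ Minv * M = 1 ∧
      (∀ (i j : Fin N), (i : ℕ) < N - 1 → ∀ hj : (j : ℕ) < N - 1,
        Minv i j = ωN * (subBasis N τ ⟨j, hj⟩).eval 1 +
          ∫ t in (1:ℝ)..(τ i), (subBasis N τ ⟨j, hj⟩).eval t) ∧
      (∀ i : Fin N, Minv i ⟨N - 1, by omega⟩ = -ωN) ∧
      (∀ (j : Fin N), ∀ hj : (j : ℕ) < N - 1,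
        Minv ⟨N - 1, by omega⟩ j = ωN * (subBasis N τ ⟨j, hj⟩).eval 1) := by
  have h_mul : M * radauInverse τ ωN = 1 :=
    mul_radauInverse_eq_one hmono.injective hωN.ne'
      (isRadauCostateDiffMatrix_of_forall (by omega) hM)
  refine ⟨radauInverse τ ωN, h_mul, mul_eq_one_comm.mp h_mul, fun i j _ hj => ?_, fun i => ?_,
    fun j hj => ?_⟩
  · exact eval_radauInverseCol hj (τ i)
  · rw [radauInverse, of_apply, radauInverseCol_of_not_lt (by simp), eval_C]
  · rw [radauInverse, of_apply, eval_radauInverseCol hj, hlast, intervalIntegral.integral_same,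
      add_zero]
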